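/- If for every α ∈ ℝ the lower level set L_{≤α} = {x ∈ ℝⁿ : f(x) ≤ α} is bounded, then any GPPA sequence {x^k} is bounded, and hence its set of cluster points is nonempty. -/

import Mathlib

/-!
Along a GPPA sequence the objective decreases: comparing the minimizer `x^{k+1}` with the
candidate `x^k`, bounding `g₂` above by the descent lemma and `h` below by the subgradient
inequality gives `f(x^{k+1}) + (t - L)/2 ‖x^{k+1} - x^k‖² ≤ f(x^k)`. Hence the whole sequence
lies in the bounded level set `{f ≤ f(x^0)}`, and Bolzano–Weierstrass yields a convergent
subsequence.
-/

open scoped RealInnerProductSpace NNReal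
open Filter Topology Set

section

variable {E : Type*} [NormedAddCommGroup E] [InnerProductSpace ℝ E] [CompleteSpace E]

theorem HasGradientAt.hasDerivAt_comp_add_smul {g : E → ℝ} {x v : E} {s : ℝ} {w : E}
    (hgrad : HasGradientAt g w (x + s • v)) :
    HasDerivAt (fun s : ℝ => g (x + s • v)) ⟪w, v⟫ s := by
  have hline : HasDerivAt (fun s : ℝ => x + s • v) v s := by
    simpa using ((hasDerivAt_id s).smul_const v).const_add x
  have hcomp := hgrad.hasFDerivAt.comp_hasDerivAt s hline
  simp only [InnerProductSpace.toDual_apply_apply] at hcomp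
  exact hcomp

theorem le_add_inner_add_of_lipschitzWith_gradient {g : E → ℝ} {g' : E → E} {L : ℝ≥0}
    (hgrad : ∀ z, HasGradientAt g (g' z) z) (hlip : LipschitzWith L g') (x y : E) :
    g y ≤ g x + ⟪g' x, y - x⟫ + L / 2 * ‖y - x‖ ^ 2 := by
  set v := y - x
  have hderiv s := (hgrad (x + s • v)).hasDerivAt_comp_add_smul
  have hB : ∀ s : ℝ, HasDerivAt (fun s : ℝ => g x + s * ⟪g' x, v⟫ + L / 2 * s ^ 2 * ‖v‖ ^ 2)
      (⟪g' x, v⟫ + L * s * ‖v‖ ^ 2) s := by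
    intro s
    exact ((((hasDerivAt_id s).mul_const ⟪g' x, v⟫).const_add (g x)).add
      (((hasDerivAt_pow 2 s).const_mul (L / 2 : ℝ)).mul_const (‖v‖ ^ 2))).congr_deriv
        (by push_cast; ring)
  have hslope : ∀ s ∈ Ico (0 : ℝ) 1, ⟪g' (x + s • v), v⟫ ≤ ⟪g' x, v⟫ + L * s * ‖v‖ ^ 2 := by
    rintro s ⟨hs, -⟩
    have hdist : ‖g' (x + s • v) - g' x‖ ≤ L * (s * ‖v‖) := by
      simpa [dist_eq_norm, norm_smul, abs_of_nonneg hs] using hlip.dist_le_mul (x + s • v) x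
    calc ⟪g' (x + s • v), v⟫ = ⟪g' x, v⟫ + ⟪g' (x + s • v) - g' x, v⟫ := by
          rw [inner_sub_left]; ring
      _ ≤ ⟪g' x, v⟫ + ‖g' (x + s • v) - g' x‖ * ‖v‖ := by gcongr; exact real_inner_le_norm _ _
      _ ≤ ⟪g' x, v⟫ + L * (s * ‖v‖) * ‖v‖ := by gcongr
      _ = ⟪g' x, v⟫ + L * s * ‖v‖ ^ 2 := by ring
  have := image_le_of_deriv_right_le_deriv_boundary
    (fun s _ => (hderiv s).continuousAt.continuousWithinAt)
    (fun s _ => (hderiv s).hasDerivWithinAt) (by simp)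
    (fun s _ => (hB s).continuousAt.continuousWithinAt)
    (fun s _ => (hB s).hasDerivWithinAt) hslope (right_mem_Icc.2 zero_le_one)
  simpa [v] using this

theorem gppa_step_sufficient_decrease {g₂ h : E → ℝ} {g₂' : E → E} {L : ℝ≥0}
    (hgrad : ∀ z, HasGradientAt g₂ (g₂' z) z) (hlip : LipschitzWith L g₂')
    {t a₀ a₁ : ℝ} {x₀ x₁ y : E} (hy : ⟪y, x₁ - x₀⟫ ≤ h x₁ - h x₀)
    (hstep : a₁ - ⟪y - g₂' x₀, x₁ - x₀⟫ + t / 2 * ‖x₁ - x₀‖ ^ 2 ≤ a₀) :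
    a₁ + g₂ x₁ - h x₁ + (t - L) / 2 * ‖x₁ - x₀‖ ^ 2 ≤ a₀ + g₂ x₀ - h x₀ := by
  have hdescent := le_add_inner_add_of_lipschitzWith_gradient hgrad hlip x₀ x₁
  rw [inner_sub_left] at hstep
  linarith

end

theorem stmt_7_general {n : ℕ}
    (g₁ : EuclideanSpace ℝ (Fin n) → EReal)
    (g₂ h : EuclideanSpace ℝ (Fin n) → ℝ)
    (g₂' : EuclideanSpace ℝ (Fin n) → EuclideanSpace ℝ (Fin n))
    (L t : ℝ) (hL : 0 ≤ L) (ht : L < t)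
    (hnotbot : ∀ z, g₁ z ≠ ⊥)
    (hgrad : ∀ z, HasGradientAt g₂ (g₂' z) z)
    (hlip : LipschitzWith L.toNNReal g₂')
    (f : EuclideanSpace ℝ (Fin n) → EReal)
    (hf : ∀ z, f z = g₁ z + ((g₂ z : ℝ) : EReal) - ((h z : ℝ) : EReal))
    (hlevel : ∀ α : ℝ, Bornology.IsBounded {z | f z ≤ ((α : ℝ) : EReal)})
    (x y : ℕ → EuclideanSpace ℝ (Fin n))
    (hdom : ∀ k, g₁ (x k) ≠ ⊤)
    (hy : ∀ k z, ⟪y k, z - x k⟫ ≤ h z - h (x k))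
    (hmin : ∀ k z,
      g₁ (x (k+1)) - ((⟪y k - g₂' (x k), x (k+1) - x k⟫ : ℝ) : EReal)
        + ((t/2 * ‖x (k+1) - x k‖^2 : ℝ) : EReal)
      ≤ g₁ z - ((⟪y k - g₂' (x k), z - x k⟫ : ℝ) : EReal)
        + ((t/2 * ‖z - x k‖^2 : ℝ) : EReal)) :
    Bornology.IsBounded (Set.range x) ∧
    ∃ xstar : EuclideanSpace ℝ (Fin n),
      ∃ φ : ℕ → ℕ, StrictMono φ ∧ Tendsto (fun l => x (φ l)) atTop (𝓝 xstar) := by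
  have hfinite : ∀ k, g₁ (x k) = ((g₁ (x k)).toReal : EReal) :=
    fun k => (EReal.coe_toReal (hdom k) (hnotbot _)).symm
  set F : ℕ → ℝ := fun k => (g₁ (x k)).toReal + g₂ (x k) - h (x k)
  have hfF : ∀ k, f (x k) = F k := by
    intro k
    rw [hf, hfinite k]
    norm_cast
  have hdecr : ∀ k, F (k + 1) ≤ F k := by
    intro k
    have hstep := hmin k (x k)
    rw [hfinite k, hfinite (k + 1)] at hstep
    simp only [sub_self, inner_zero_right, norm_zero] at hstep
    norm_cast at hstep
    have hdecrease := gppa_step_sufficient_decrease hgrad hlip (hy k (x (k + 1))) hstep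
    rw [Real.coe_toNNReal L hL] at hdecrease
    have hgap : 0 ≤ (t - L) / 2 * ‖x (k + 1) - x k‖ ^ 2 :=
      mul_nonneg (by linarith) (sq_nonneg _)
    linarith
  have hsub : Set.range x ⊆ {z | f z ≤ F 0} := by
    rintro _ ⟨k, rfl⟩
    show f (x k) ≤ _
    rw [hfF]
    exact_mod_cast antitone_nat_of_succ_le hdecr (Nat.zero_le k)
  have hbdd := (hlevel (F 0)).subset hsub
  obtain ⟨xstar, -, φ, hφ, htend⟩ := tendsto_subseq_of_bounded hbdd Set.mem_range_self
  exact ⟨hbdd, xstar, φ, hφ, htend⟩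

/-- If every lower level set `{x : f(x) ≤ α}` is bounded, then any GPPA sequence is
bounded and its set of cluster points is nonempty. Here `f = g₁ + g₂ − h`. -/
theorem stmt_7 {n : ℕ}
    (g₁ : EuclideanSpace ℝ (Fin n) → EReal)
    (g₂ h : EuclideanSpace ℝ (Fin n) → ℝ)
    (g₂' : EuclideanSpace ℝ (Fin n) → EuclideanSpace ℝ (Fin n))
    (L t : ℝ) (hL : 0 ≤ L) (ht : L < t)
    (hproper : ∃ z, g₁ z ≠ ⊤) (hnotbot : ∀ z, g₁ z ≠ ⊥)
    (hlsc : LowerSemicontinuous g₁)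
    (hgrad : ∀ z, HasGradientAt g₂ (g₂' z) z)
    (hlip : LipschitzWith L.toNNReal g₂')
    (hconv : ConvexOn ℝ Set.univ h)
    (f : EuclideanSpace ℝ (Fin n) → EReal)
    (hf : ∀ z, f z = g₁ z + ((g₂ z : ℝ) : EReal) - ((h z : ℝ) : EReal))
    (hlevel : ∀ α : ℝ, Bornology.IsBounded {z | f z ≤ ((α : ℝ) : EReal)})
    (x y : ℕ → EuclideanSpace ℝ (Fin n))
    (hdom : ∀ k, g₁ (x k) ≠ ⊤)
    (hy : ∀ k z, ⟪y k, z - x k⟫ ≤ h z - h (x k))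
    (hmin : ∀ k z,
      g₁ (x (k+1)) - ((⟪y k - g₂' (x k), x (k+1) - x k⟫ : ℝ) : EReal)
        + ((t/2 * ‖x (k+1) - x k‖^2 : ℝ) : EReal)
      ≤ g₁ z - ((⟪y k - g₂' (x k), z - x k⟫ : ℝ) : EReal)
        + ((t/2 * ‖z - x k‖^2 : ℝ) : EReal)) :
    Bornology.IsBounded (Set.range x) ∧
    ∃ xstar : EuclideanSpace ℝ (Fin n),
      ∃ φ : ℕ → ℕ, StrictMono φ ∧ Tendsto (fun l => x (φ l)) atTop (𝓝 xstar) :=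
  stmt_7_general g₁ g₂ h g₂' L t hL ht hnotbot hgrad hlip f hf hlevel x y hdom hy hmin
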